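/- Let f : ℝⁿ → ℝ be twice continuously differentiable and suppose there are constants 0 < Λ₂ ≤ Λ₁, a point x* ∈ ℝⁿ, and ρ > 0 such that Λ₂‖v‖² ≤ vᵀ∇²f(y)v ≤ Λ₁‖v‖² for all v ∈ ℝⁿ and all y in the closed ball B_ρ(x*). Let x ∈ B_ρ(x*) with ∇f(x) ≠ 0 and Δτ > 0 be such that x_new = x − Δτ ∇f(x) ∈ B_ρ(x*). Then the long KGD step-size satisfies 1/Λ₁ ≤ K1(x_new; x, Δτ) ≤ 1/Λ₂. -/

import Mathlib

/-!
Along the segment from `x` to `x_new = x - Δτ ∇f(x)`, which stays in the ball by convexity,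
second-order Taylor expansion with the Hessian bounds gives
`-Δτ‖∇f(x)‖² + (Λ₂/2)Δτ²‖∇f(x)‖² ≤ f(x_new) - f(x) ≤ -Δτ‖∇f(x)‖² + (Λ₁/2)Δτ²‖∇f(x)‖²`.
So the denominator of `K1` lies between `Λ₂Δτ` and `Λ₁Δτ`, and `K1` between `1/Λ₁` and `1/Λ₂`.
-/

open Set
open scoped RealInnerProductSpace

/-- The long KGD step-size
`K1(x_new; x, α) = α / (2 + 2(f(x_new) − f(x))/(α ‖G(x)‖²))` with `x_new = x − α G(x)`. -/
noncomputable def K1 {n : ℕ} (f : EuclideanSpace ℝ (Fin n) → ℝ)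
    (G : EuclideanSpace ℝ (Fin n) → EuclideanSpace ℝ (Fin n))
    (x : EuclideanSpace ℝ (Fin n)) (α : ℝ) : ℝ :=
  α / (2 + 2 * (f (x - α • G x) - f x) / (α * ‖G x‖ ^ 2))

theorem taylor_lower_bound_of_hasDerivAt {g g' g'' : ℝ → ℝ} {c : ℝ}
    (hg : ∀ t, HasDerivAt g (g' t) t) (hg' : ∀ t, HasDerivAt g' (g'' t) t)
    (hc : ∀ t ∈ Ioo (0 : ℝ) 1, c ≤ g'' t) :
    g 0 + g' 0 + c / 2 ≤ g 1 := by
  have hslope : ∀ t ∈ Icc (0 : ℝ) 1, g' 0 + c * t ≤ g' t := by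
    have hmono : MonotoneOn (fun t => g' t - c * t) (Icc 0 1) := by
      refine monotoneOn_of_hasDerivWithinAt_nonneg (f' := fun t => g'' t - c * 1)
        (convex_Icc 0 1)
        (fun t _ => ?_) (fun t _ => ?_) (fun t ht => ?_)
      · exact ((hg' t).continuousAt.sub (continuousAt_const.mul continuousAt_id)).continuousWithinAt
      · exact ((hg' t).sub ((hasDerivAt_id t).const_mul c)).hasDerivWithinAt
      · rw [interior_Icc] at ht
        simpa using hc t ht
    intro t ht
    have := hmono (left_mem_Icc.2 zero_le_one) ht ht.1
    simp only [mul_zero, sub_zero] at this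
    linarith
  have hmono : MonotoneOn (fun t => g t - g' 0 * t - c / 2 * t ^ 2) (Icc 0 1) := by
    refine monotoneOn_of_hasDerivWithinAt_nonneg
      (f' := fun t => g' t - g' 0 * 1 - c / 2 * (↑2 * t ^ (2 - 1))) (convex_Icc 0 1)
      (fun t _ => ?_) (fun t _ => ?_) (fun t ht => ?_)
    · exact ((hg t).continuousAt.sub (continuousAt_const.mul continuousAt_id)).sub
        (continuousAt_const.mul (continuousAt_id.pow 2)) |>.continuousWithinAt
    · exact (((hg t).sub ((hasDerivAt_id t).const_mul _)).sub
        ((hasDerivAt_pow 2 t).const_mul _)).hasDerivWithinAt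
    · rw [interior_Icc] at ht
      have := hslope t (Ioo_subset_Icc_self ht)
      simp only [mul_one]
      linarith
  have := hmono (left_mem_Icc.2 zero_le_one) (right_mem_Icc.2 zero_le_one) zero_le_one
  simp only [mul_zero, sub_zero, zero_pow two_ne_zero, mul_one, one_pow] at this
  linarith

theorem taylor_upper_bound_of_hasDerivAt {g g' g'' : ℝ → ℝ} {C : ℝ}
    (hg : ∀ t, HasDerivAt g (g' t) t) (hg' : ∀ t, HasDerivAt g' (g'' t) t)
    (hC : ∀ t ∈ Ioo (0 : ℝ) 1, g'' t ≤ C) :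
    g 1 ≤ g 0 + g' 0 + C / 2 := by
  have := taylor_lower_bound_of_hasDerivAt (g := -g) (g' := -g') (g'' := -g'') (c := -C)
    (fun t => (hg t).neg) (fun t => (hg' t).neg) (fun t ht => neg_le_neg (hC t ht))
  simp only [Pi.neg_apply] at this
  linarith

section Hessian

variable {E : Type*} [NormedAddCommGroup E] [InnerProductSpace ℝ E] [CompleteSpace E]
  {f : E → ℝ}

theorem ContDiff.contDiff_gradient (hf : ContDiff ℝ 2 f) : ContDiff ℝ 1 (gradient f) :=
  (InnerProductSpace.toDual ℝ E).symm.contDiff.comp (hf.fderiv_right (by norm_num))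

theorem ContDiff.hasDerivAt_comp_add_smul (hf : ContDiff ℝ 2 f) (x d : E) (t : ℝ) :
    HasDerivAt (fun t : ℝ => f (x + t • d)) ⟪d, gradient f (x + t • d)⟫ t := by
  have hline : HasDerivAt (fun t : ℝ => x + t • d) d t := by
    simpa using ((hasDerivAt_id t).smul_const d).const_add x
  rw [real_inner_comm]
  exact ((hf.differentiable (by norm_num)) _).hasGradientAt.hasFDerivAt.comp_hasDerivAt t hline

theorem ContDiff.hasDerivAt_inner_gradient_add_smul (hf : ContDiff ℝ 2 f) (x d : E) (t : ℝ) :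
    HasDerivAt (fun t : ℝ => ⟪d, gradient f (x + t • d)⟫)
      ⟪d, fderiv ℝ (gradient f) (x + t • d) d⟫ t := by
  have hline : HasDerivAt (fun t : ℝ => x + t • d) d t := by
    simpa using ((hasDerivAt_id t).smul_const d).const_add x
  have hgrad :=
    ((hf.contDiff_gradient.differentiable one_ne_zero) _).hasFDerivAt.comp_hasDerivAt t hline
  exact (innerSL ℝ d).hasFDerivAt.comp_hasDerivAt t hgrad

theorem ContDiff.taylor_lower_bound_of_hessian (hf : ContDiff ℝ 2 f) {x y : E} {c : ℝ}
    (h : ∀ z ∈ segment ℝ x y, c * ‖y - x‖ ^ 2 ≤ ⟪y - x, fderiv ℝ (gradient f) z (y - x)⟫) :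
    f x + ⟪y - x, gradient f x⟫ + c / 2 * ‖y - x‖ ^ 2 ≤ f y := by
  have := taylor_lower_bound_of_hasDerivAt (hf.hasDerivAt_comp_add_smul x (y - x))
    (hf.hasDerivAt_inner_gradient_add_smul x (y - x))
    (fun t ht => h _ (segment_eq_image' ℝ x y ▸ ⟨t, Ioo_subset_Icc_self ht, rfl⟩))
  simp only [zero_smul, add_zero, one_smul, add_sub_cancel] at this
  linarith

theorem ContDiff.taylor_upper_bound_of_hessian (hf : ContDiff ℝ 2 f) {x y : E} {C : ℝ}
    (h : ∀ z ∈ segment ℝ x y, ⟪y - x, fderiv ℝ (gradient f) z (y - x)⟫ ≤ C * ‖y - x‖ ^ 2) :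
    f y ≤ f x + ⟪y - x, gradient f x⟫ + C / 2 * ‖y - x‖ ^ 2 := by
  have := taylor_upper_bound_of_hasDerivAt (hf.hasDerivAt_comp_add_smul x (y - x))
    (hf.hasDerivAt_inner_gradient_add_smul x (y - x))
    (fun t ht => h _ (segment_eq_image' ℝ x y ▸ ⟨t, Ioo_subset_Icc_self ht, rfl⟩))
  simp only [zero_smul, add_zero, one_smul, add_sub_cancel] at this
  linarith

end Hessian

theorem K1_mem_Icc_of_quadratic_bounds {n : ℕ} {f : EuclideanSpace ℝ (Fin n) → ℝ}
    {G : EuclideanSpace ℝ (Fin n) → EuclideanSpace ℝ (Fin n)} {x : EuclideanSpace ℝ (Fin n)}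
    {α m M : ℝ} (hα : 0 < α) (hG : G x ≠ 0) (hm : 0 < m)
    (hlo : f x - α * ‖G x‖ ^ 2 + m / 2 * (α ^ 2 * ‖G x‖ ^ 2) ≤ f (x - α • G x))
    (hhi : f (x - α • G x) ≤ f x - α * ‖G x‖ ^ 2 + M / 2 * (α ^ 2 * ‖G x‖ ^ 2)) :
    1 / M ≤ K1 f G x α ∧ K1 f G x α ≤ 1 / m := by
  have hαN : 0 < α * ‖G x‖ ^ 2 := by positivity
  set D := 2 + 2 * (f (x - α • G x) - f x) / (α * ‖G x‖ ^ 2)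
  have hmD : m * α ≤ D := by
    rw [← sub_le_iff_le_add', le_div_iff₀ hαN]
    nlinarith
  have hDM : D ≤ M * α := by
    rw [← le_sub_iff_add_le', div_le_iff₀ hαN]
    nlinarith
  have hD : 0 < D := lt_of_lt_of_le (by positivity) hmD
  have hM : 0 < M := pos_of_mul_pos_left (hD.trans_le hDM) hα.le
  constructor
  · rw [K1, div_le_div_iff₀ hM hD]
    linarith
  · rw [K1, div_le_div_iff₀ hD hm]
    linarith

theorem stmt_15_general {n : ℕ} (f : EuclideanSpace ℝ (Fin n) → ℝ) (hf : ContDiff ℝ 2 f)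
    (xs : EuclideanSpace ℝ (Fin n))
    (Λ₁ Λ₂ ρ : ℝ) (hΛ₂ : 0 < Λ₂)
    (hHess : ∀ y ∈ Metric.closedBall xs ρ, ∀ v : EuclideanSpace ℝ (Fin n),
      Λ₂ * ‖v‖ ^ 2 ≤ ⟪v, fderiv ℝ (gradient f) y v⟫ ∧
        ⟪v, fderiv ℝ (gradient f) y v⟫ ≤ Λ₁ * ‖v‖ ^ 2)
    (x : EuclideanSpace ℝ (Fin n)) (hx : x ∈ Metric.closedBall xs ρ)
    (hGx : gradient f x ≠ 0)
    (Δτ : ℝ) (hΔτ : 0 < Δτ)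
    (hnew : x - Δτ • gradient f x ∈ Metric.closedBall xs ρ) :
    1 / Λ₁ ≤ K1 f (gradient f) x Δτ ∧ K1 f (gradient f) x Δτ ≤ 1 / Λ₂ := by
  have hseg := (convex_closedBall xs ρ).segment_subset hx hnew
  have hlo := hf.taylor_lower_bound_of_hessian fun z hz => (hHess z (hseg hz) _).1
  have hhi := hf.taylor_upper_bound_of_hessian fun z hz => (hHess z (hseg hz) _).2
  have hstep : x - Δτ • gradient f x - x = -(Δτ • gradient f x) := by abel
  have hinner : ⟪-(Δτ • gradient f x), gradient f x⟫ = -(Δτ * ‖gradient f x‖ ^ 2) := by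
    rw [inner_neg_left, real_inner_smul_left, real_inner_self_eq_norm_sq]
  have hnorm : ‖-(Δτ • gradient f x)‖ ^ 2 = Δτ ^ 2 * ‖gradient f x‖ ^ 2 := by
    rw [norm_neg, norm_smul, Real.norm_of_nonneg hΔτ.le, mul_pow]
  rw [hstep, hinner, hnorm] at hlo hhi
  exact K1_mem_Icc_of_quadratic_bounds hΔτ hGx hΛ₂ (by linarith) (by linarith)

/-- Under two-sided Hessian bounds `Λ₂‖v‖² ≤ vᵀ∇²f(y)v ≤ Λ₁‖v‖²` on the
closed ball `B_ρ(x*)`, the long KGD step-size satisfies `1/Λ₁ ≤ K1 ≤ 1/Λ₂`. -/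
theorem stmt_15 {n : ℕ} (f : EuclideanSpace ℝ (Fin n) → ℝ) (hf : ContDiff ℝ 2 f)
    (xs : EuclideanSpace ℝ (Fin n))
    (Λ₁ Λ₂ ρ : ℝ) (hΛ₂ : 0 < Λ₂) (hΛ : Λ₂ ≤ Λ₁) (hρ : 0 < ρ)
    (hHess : ∀ y ∈ Metric.closedBall xs ρ, ∀ v : EuclideanSpace ℝ (Fin n),
      Λ₂ * ‖v‖ ^ 2 ≤ ⟪v, fderiv ℝ (gradient f) y v⟫ ∧
        ⟪v, fderiv ℝ (gradient f) y v⟫ ≤ Λ₁ * ‖v‖ ^ 2)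
    (x : EuclideanSpace ℝ (Fin n)) (hx : x ∈ Metric.closedBall xs ρ)
    (hGx : gradient f x ≠ 0)
    (Δτ : ℝ) (hΔτ : 0 < Δτ)
    (hnew : x - Δτ • gradient f x ∈ Metric.closedBall xs ρ) :
    1 / Λ₁ ≤ K1 f (gradient f) x Δτ ∧ K1 f (gradient f) x Δτ ≤ 1 / Λ₂ :=
  stmt_15_general f hf xs Λ₁ Λ₂ ρ hΛ₂ hHess x hx hGx Δτ hΔτ hnew
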